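/- Let P be a partition in a set A and B, C ⊆ R(P) with B ∩ C = ∅ and R_{P,B} ∩ C ≠ ∅. Then inserting P_(B) into (P/P_(B))_(C) at the member (R_{P,B} \ B) ∩ C via the map sending each x ∈ I ∩ (R_{P,B} \ B) ∩ C (for I ∈ P with I ∩ B ≠ ∅) to the member I ∩ B of P_(B) yields exactly P_(B∪C); consequently P/P_(B∪C) = (P/P_(B)) / (P_(B∪C)/(P_(B∪C))_(B)). -/
import Mathlib


namespace PartitionOps

variable {α : Type*} [DecidableEq α]

/-- The support `R(P)` of a collection of finite sets: the union of its members. -/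
def supp (P : Finset (Finset α)) : Finset α := P.sup id

/-- A partition in `A`: a finite collection of pairwise disjoint nonempty finite sets. -/
def IsPartition (P : Finset (Finset α)) : Prop :=
  (∀ I ∈ P, I.Nonempty) ∧ ∀ I ∈ P, ∀ I' ∈ P, I ≠ I' → Disjoint I I'

/-- The restriction `P_(B) = { I ∩ B : I ∈ P, I ∩ B ≠ ∅ }`. -/
def restrict (P : Finset (Finset α)) (B : Finset α) : Finset (Finset α) :=
  (P.filter fun I => (I ∩ B).Nonempty).image (· ∩ B)

/-- `R_{P,B}`: the union of the members of `P` meeting `B`. -/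
def RB (P : Finset (Finset α)) (B : Finset α) : Finset α :=
  (P.filter fun I => (I ∩ B).Nonempty).sup id

/-- The quotient `P / P_(B)`: the members of `P` disjoint from `B`, together with
`R_{P,B} \ B` (omitted when empty). -/
def quot (P : Finset (Finset α)) (B : Finset α) : Finset (Finset α) :=
  (insert (RB P B \ B) (P.filter fun I => I ∩ B = ∅)).erase ∅

/-- Quotient of `P` by a partition `Q` (meaningful when `Q` coincides with the
restriction of `P` to the support of `Q`): `P / Q := P / P_(R(Q))`. -/
def quotBy (P Q : Finset (Finset α)) : Finset (Finset α) := quot P (supp Q)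

/-- The preimage `ι⁻¹(J) ⊆ B` of a member `J` under a map `ι` defined on `B`. -/
def fiber (B : Finset α) (f : {x // x ∈ B} → Finset α) (J : Finset α) : Finset α :=
  (B.attach.filter fun x => f x = J).image Subtype.val

/-- The insertion `P ∘ₐ^ι Q` of `Q` into `P` at the member `Ia` via `ι : Ia → Q`:
remove `Ia` from `P` and add the sets `J ∪ ι⁻¹(J)` for the members `J` of `Q`. -/
def ins (P : Finset (Finset α)) (Ia : Finset α) (Q : Finset (Finset α))
    (ι : {x // x ∈ Ia} → {J // J ∈ Q}) : Finset (Finset α) :=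
  P.erase Ia ∪ Q.image fun J => J ∪ fiber Ia (fun x => (ι x : Finset α)) J

lemma mem_supp {P : Finset (Finset α)} {x : α} : x ∈ supp P ↔ ∃ I ∈ P, x ∈ I := by
  simp [supp, Finset.mem_sup]

lemma mem_RB {P : Finset (Finset α)} {B : Finset α} {x : α} :
    x ∈ RB P B ↔ ∃ I ∈ P, (I ∩ B).Nonempty ∧ x ∈ I := by
  simp only [RB, Finset.mem_sup, Finset.mem_filter, id]
  tauto

lemma mem_restrict {P : Finset (Finset α)} {B K : Finset α} :
    K ∈ restrict P B ↔ ∃ I ∈ P, (I ∩ B).Nonempty ∧ K = I ∩ B := by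
  simp only [restrict, Finset.mem_image, Finset.mem_filter]
  constructor
  · rintro ⟨I, ⟨hI, hne⟩, rfl⟩; exact ⟨I, hI, hne, rfl⟩
  · rintro ⟨I, hI, hne, rfl⟩; exact ⟨I, ⟨hI, hne⟩, rfl⟩

lemma mem_quot {P : Finset (Finset α)} {B K : Finset α} :
    K ∈ quot P B ↔ K ≠ ∅ ∧ (K = RB P B \ B ∨ (K ∈ P ∧ K ∩ B = ∅)) := by
  simp [quot, Finset.mem_erase, Finset.mem_insert, Finset.mem_filter]

lemma mem_fiber {B : Finset α} {f : {x // x ∈ B} → Finset α} {J : Finset α} {x : α} :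
    x ∈ fiber B f J ↔ ∃ h : x ∈ B, f ⟨x, h⟩ = J := by
  simp only [fiber, Finset.mem_image, Finset.mem_filter, Finset.mem_attach, true_and]
  constructor
  · rintro ⟨⟨a, ha⟩, hf, rfl⟩; exact ⟨ha, hf⟩
  · rintro ⟨h, hf⟩; exact ⟨⟨x, h⟩, hf, rfl⟩

lemma mem_ins {P : Finset (Finset α)} {Ia : Finset α} {Q : Finset (Finset α)}
    {ι : {x // x ∈ Ia} → {J // J ∈ Q}} {K : Finset α} :
    K ∈ ins P Ia Q ι ↔ (K ∈ P ∧ K ≠ Ia) ∨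
      ∃ J ∈ Q, K = J ∪ fiber Ia (fun x => (ι x : Finset α)) J := by
  simp only [ins, Finset.mem_union, Finset.mem_erase, Finset.mem_image]
  constructor
  · rintro (⟨h1, h2⟩ | ⟨J, hJ, rfl⟩)
    · exact Or.inl ⟨h2, h1⟩
    · exact Or.inr ⟨J, hJ, rfl⟩
  · rintro (⟨h1, h2⟩ | ⟨J, hJ, rfl⟩)
    · exact Or.inl ⟨h2, h1⟩
    · exact Or.inr ⟨J, hJ, rfl⟩

lemma supp_restrict (P : Finset (Finset α)) (D : Finset α) :
    supp (restrict P D) = supp P ∩ D := by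
  ext x
  simp only [mem_supp, Finset.mem_inter]
  constructor
  · rintro ⟨K, hK, hx⟩
    obtain ⟨I, hI, _, rfl⟩ := mem_restrict.mp hK
    exact ⟨⟨I, hI, (Finset.mem_inter.mp hx).1⟩, (Finset.mem_inter.mp hx).2⟩
  · rintro ⟨⟨I, hI, hxI⟩, hxD⟩
    exact ⟨I ∩ D, mem_restrict.mpr ⟨I, hI, ⟨x, Finset.mem_inter.mpr ⟨hxI, hxD⟩⟩, rfl⟩,
      Finset.mem_inter.mpr ⟨hxI, hxD⟩⟩

lemma supp_quot (P : Finset (Finset α)) (B : Finset α) :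
    supp (quot P B) = supp P \ B := by
  ext x
  simp only [mem_supp, Finset.mem_sdiff]
  constructor
  · rintro ⟨K, hK, hx⟩
    obtain ⟨-, rfl | ⟨hKP, hKB⟩⟩ := mem_quot.mp hK
    · obtain ⟨hx1, hx2⟩ := Finset.mem_sdiff.mp hx
      obtain ⟨I, hI, _, hxI⟩ := mem_RB.mp hx1
      exact ⟨⟨I, hI, hxI⟩, hx2⟩
    · refine ⟨⟨K, hKP, hx⟩, fun hxB => ?_⟩
      have : x ∈ K ∩ B := Finset.mem_inter.mpr ⟨hx, hxB⟩
      simp [hKB] at this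
  · rintro ⟨⟨I, hI, hxI⟩, hxB⟩
    by_cases h : (I ∩ B).Nonempty
    · have hx : x ∈ RB P B \ B := Finset.mem_sdiff.mpr ⟨mem_RB.mpr ⟨I, hI, h, hxI⟩, hxB⟩
      exact ⟨RB P B \ B, mem_quot.mpr ⟨Finset.ne_empty_of_mem hx, Or.inl rfl⟩, hx⟩
    · exact ⟨I, mem_quot.mpr ⟨Finset.ne_empty_of_mem hxI,
        Or.inr ⟨hI, Finset.not_nonempty_iff_eq_empty.mp h⟩⟩, hxI⟩


/-- if `B ∩ C = ∅` and `R_{P,B} ∩ C ≠ ∅`, then inserting `P_(B)` into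
`(P/P_(B))_(C)` at the member `(R_{P,B} \ B) ∩ C` via the map sending each
`x ∈ I ∩ (R_{P,B} \ B) ∩ C` (for `I ∈ P` with `I ∩ B ≠ ∅`) to the member `I ∩ B`
of `P_(B)` yields exactly `P_(B∪C)`; consequently
`P/P_(B∪C) = (P/P_(B)) / (P_(B∪C)/(P_(B∪C))_(B))`. -/
theorem nontrivial_ins_case (P : Finset (Finset α)) (hP : IsPartition P)
    (B C : Finset α) (hB : B ⊆ supp P) (hC : C ⊆ supp P) (hBC : Disjoint B C)
    (hR : (RB P B ∩ C).Nonempty)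
    (ι : {x // x ∈ (RB P B \ B) ∩ C} → {J // J ∈ restrict P B})
    (hι : ∀ I ∈ P, (I ∩ B).Nonempty →
      ∀ x : {x // x ∈ (RB P B \ B) ∩ C}, (x : α) ∈ I → (ι x : Finset α) = I ∩ B) :
    ins (restrict (quot P B) C) ((RB P B \ B) ∩ C) (restrict P B) ι
        = restrict P (B ∪ C) ∧
      quot P (B ∪ C) = quotBy (quot P B) (quot (restrict P (B ∪ C)) B) := by
  have huniq : ∀ {I I' : Finset α} {x : α}, I ∈ P → I' ∈ P → x ∈ I → x ∈ I' → I = I' := by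
    intro I I' x hI hI' hx hx'
    by_contra h
    exact (Finset.disjoint_left.mp (hP.2 I hI I' hI' h) hx) hx'
  have hIaNe : ((RB P B \ B) ∩ C).Nonempty := by
    obtain ⟨x, hx⟩ := hR
    obtain ⟨hxR, hxC⟩ := Finset.mem_inter.mp hx
    exact ⟨x, Finset.mem_inter.mpr ⟨Finset.mem_sdiff.mpr
      ⟨hxR, fun hxB => Finset.disjoint_left.mp hBC hxB hxC⟩, hxC⟩⟩
  have hDne : (RB P B \ B).Nonempty := hIaNe.mono Finset.inter_subset_left
  -- the fiber of I ∩ B is I ∩ C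
  have hfib : ∀ I ∈ P, (I ∩ B).Nonempty →
      fiber ((RB P B \ B) ∩ C) (fun x => (ι x : Finset α)) (I ∩ B) = I ∩ C := by
    intro I hIP hIB
    ext x
    rw [mem_fiber]
    constructor
    · rintro ⟨hx, hf⟩
      obtain ⟨hx1, hxC⟩ := Finset.mem_inter.mp hx
      obtain ⟨I', hI', hI'B, hxI'⟩ := mem_RB.mp (Finset.mem_sdiff.mp hx1).1
      rw [hι I' hI' hI'B ⟨x, hx⟩ hxI'] at hf
      obtain ⟨y, hy⟩ := hIB
      have hyI' : y ∈ I' := (Finset.mem_inter.mp (hf ▸ hy)).1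
      exact Finset.mem_inter.mpr
        ⟨(huniq hI' hIP hyI' (Finset.mem_inter.mp hy).1) ▸ hxI', hxC⟩
    · intro hxIC
      obtain ⟨hxI, hxC⟩ := Finset.mem_inter.mp hxIC
      have hxB : x ∉ B := fun h => Finset.disjoint_left.mp hBC h hxC
      have hx : x ∈ (RB P B \ B) ∩ C := Finset.mem_inter.mpr
        ⟨Finset.mem_sdiff.mpr ⟨mem_RB.mpr ⟨I, hIP, hIB, hxI⟩, hxB⟩, hxC⟩
      exact ⟨hx, hι I hIP hIB ⟨x, hx⟩ hxI⟩
  -- I ∩ C for I disjoint from B can never equal the special member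
  have hIane : ∀ I ∈ P, I ∩ B = ∅ → I ∩ C ≠ (RB P B \ B) ∩ C := by
    intro I hIP hIB heq
    obtain ⟨x, hx⟩ := hIaNe
    have hxI : x ∈ I := (Finset.mem_inter.mp (heq ▸ hx)).1
    obtain ⟨hx1, hxC⟩ := Finset.mem_inter.mp hx
    obtain ⟨I', hI', hI'B, hxI'⟩ := mem_RB.mp (Finset.mem_sdiff.mp hx1).1
    rw [huniq hIP hI' hxI hxI'] at hIB
    rw [hIB] at hI'B
    exact hI'B.ne_empty rfl
  constructor
  · ext K
    rw [mem_ins]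
    constructor
    · rintro (⟨hK, hKne⟩ | ⟨J, hJ, rfl⟩)
      · obtain ⟨M, hM, hMC, rfl⟩ := mem_restrict.mp hK
        obtain ⟨-, rfl | ⟨hMP, hMB⟩⟩ := mem_quot.mp hM
        · exact absurd rfl hKne
        · refine mem_restrict.mpr ⟨M, hMP, ?_, ?_⟩ <;>
            rw [Finset.inter_union_distrib_left, hMB, Finset.empty_union]
          exact hMC
      · obtain ⟨I, hIP, hIB, rfl⟩ := mem_restrict.mp hJ
        rw [hfib I hIP hIB, ← Finset.inter_union_distrib_left]
        refine mem_restrict.mpr ⟨I, hIP, ?_, rfl⟩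
        obtain ⟨y, hy⟩ := hIB
        obtain ⟨hyI, hyB⟩ := Finset.mem_inter.mp hy
        exact ⟨y, Finset.mem_inter.mpr ⟨hyI, Finset.mem_union_left _ hyB⟩⟩
    · intro hK
      obtain ⟨I, hIP, hIBC, rfl⟩ := mem_restrict.mp hK
      by_cases h : (I ∩ B).Nonempty
      · refine Or.inr ⟨I ∩ B, mem_restrict.mpr ⟨I, hIP, h, rfl⟩, ?_⟩
        rw [hfib I hIP h, ← Finset.inter_union_distrib_left]
      · have hIB : I ∩ B = ∅ := Finset.not_nonempty_iff_eq_empty.mp h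
        have hKC : I ∩ (B ∪ C) = I ∩ C := by
          rw [Finset.inter_union_distrib_left, hIB, Finset.empty_union]
        rw [hKC]
        refine Or.inl ⟨mem_restrict.mpr ⟨I, ?_, ?_, rfl⟩, hIane I hIP hIB⟩
        · exact mem_quot.mpr ⟨(hP.1 I hIP).ne_empty, Or.inr ⟨hIP, hIB⟩⟩
        · rw [← hKC]; exact hIBC
  · have hsuppQ' : supp (quot (restrict P (B ∪ C)) B) = C := by
      rw [supp_quot, supp_restrict, Finset.inter_eq_right.mpr (Finset.union_subset hB hC),
        Finset.union_sdiff_cancel_left hBC]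
    rw [quotBy, hsuppQ']
    have hRBeq : RB (quot P B) C = RB P (B ∪ C) \ B := by
      ext x
      rw [mem_RB, Finset.mem_sdiff, mem_RB]
      constructor
      · rintro ⟨M, hM, hMC, hxM⟩
        obtain ⟨-, rfl | ⟨hMP, hMB⟩⟩ := mem_quot.mp hM
        · obtain ⟨hx1, hx2⟩ := Finset.mem_sdiff.mp hxM
          obtain ⟨I, hI, hIB, hxI⟩ := mem_RB.mp hx1
          obtain ⟨y, hy⟩ := hIB
          obtain ⟨hyI, hyB⟩ := Finset.mem_inter.mp hy
          exact ⟨⟨I, hI, ⟨y, Finset.mem_inter.mpr ⟨hyI, Finset.mem_union_left _ hyB⟩⟩,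
            hxI⟩, hx2⟩
        · refine ⟨⟨M, hMP, ?_, hxM⟩, fun hxB => ?_⟩
          · rw [Finset.inter_union_distrib_left, hMB, Finset.empty_union]; exact hMC
          · have : x ∈ M ∩ B := Finset.mem_inter.mpr ⟨hxM, hxB⟩
            simp [hMB] at this
      · rintro ⟨⟨I, hI, hIBC, hxI⟩, hxB⟩
        by_cases h : (I ∩ B).Nonempty
        · exact ⟨RB P B \ B, mem_quot.mpr ⟨hDne.ne_empty, Or.inl rfl⟩, hIaNe,
            Finset.mem_sdiff.mpr ⟨mem_RB.mpr ⟨I, hI, h, hxI⟩, hxB⟩⟩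
        · have hIB : I ∩ B = ∅ := Finset.not_nonempty_iff_eq_empty.mp h
          have hIC : (I ∩ C).Nonempty := by
            rwa [Finset.inter_union_distrib_left, hIB, Finset.empty_union] at hIBC
          exact ⟨I, mem_quot.mpr ⟨Finset.ne_empty_of_mem hxI, Or.inr ⟨hI, hIB⟩⟩, hIC, hxI⟩
    ext K
    rw [mem_quot, mem_quot, hRBeq, sdiff_sdiff]
    constructor
    · rintro ⟨hKne, rfl | ⟨hKP, hKBC⟩⟩
      · exact ⟨hKne, Or.inl rfl⟩
      · rw [Finset.inter_union_distrib_left, Finset.union_eq_empty] at hKBC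
        exact ⟨hKne, Or.inr ⟨mem_quot.mpr ⟨hKne, Or.inr ⟨hKP, hKBC.1⟩⟩, hKBC.2⟩⟩
    · rintro ⟨hKne, rfl | ⟨hKQ, hKC⟩⟩
      · exact ⟨hKne, Or.inl rfl⟩
      · obtain ⟨-, rfl | ⟨hKP, hKB⟩⟩ := mem_quot.mp hKQ
        · exact absurd hKC hIaNe.ne_empty
        · refine ⟨hKne, Or.inr ⟨hKP, ?_⟩⟩
          rw [Finset.inter_union_distrib_left, hKB, Finset.empty_union, hKC]

end PartitionOps
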